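/- arXiv:math/0611569 — 4 statements merged into one kernel-verified Lean document; each statement's English description precedes it below -/
import Mathlib

section
/- Let H be an infinite-dimensional separable Hilbert space and K ⊂ H a compact subset. Then for every C > 1 there exists a frame {h_i}_{i∈ℕ} for H with frame bounds A, B satisfying B/A < C such that: for every f ∈ K and every ε > 0 there exist an index i ∈ ℕ and a scalar c with ‖f − c·h_i‖_H < ε (i.e., the best 1-term approximation error from the frame is 0 on K). -/
open scoped RealInnerProductSpace

/-!
Start from a Parseval frame `e` (a Hilbert basis, padded with zeros to be indexed by `ℕ`) and
interleave it with a dense sequence `d k`, rescaled to vectors `g k` whose squared norms sum to at most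
`η`. By Cauchy–Schwarz the added coefficients contribute at most `η ‖f‖²`, so
`‖f‖² ≤ ∑ ⟪f, h_k⟫² ≤ (1 + η) ‖f‖²`, and the bound ratio tends to `1` as `η → 0`. Since each
`d k` is a nonzero multiple of `g k`, every vector is a limit of one-term approximations.
-/

theorem Orthonormal.countable_index {𝕜 E ι : Type*} [RCLike 𝕜] [NormedAddCommGroup E]
    [InnerProductSpace 𝕜 E] [TopologicalSpace.SeparableSpace E] {v : ι → E}
    (hv : Orthonormal 𝕜 v) : Countable ι := by
  refine Pairwise.countable_of_isOpen_disjoint (s := fun i => Metric.ball (v i) (1 / 2))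
    (fun i j hij => Metric.ball_disjoint_ball ?_) (fun _ => Metric.isOpen_ball)
    (fun i => ⟨v i, Metric.mem_ball_self (by norm_num)⟩)
  have h : ‖v i - v j‖ ^ 2 = 2 := by
    rw [@norm_sub_sq 𝕜, hv.1 i, hv.1 j, hv.2 hij]; norm_num
  rw [dist_eq_norm]
  nlinarith [norm_nonneg (v i - v j)]

theorem exists_seq_hasSum_inner_sq_eq_norm_sq {H : Type*} [NormedAddCommGroup H]
    [InnerProductSpace ℝ H] [CompleteSpace H] [TopologicalSpace.SeparableSpace H] :
    ∃ e : ℕ → H, ∀ f : H, HasSum (fun n => ⟪f, e n⟫ ^ 2) (‖f‖ ^ 2) := by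
  obtain ⟨w, b, -⟩ := exists_hilbertBasis ℝ H
  have := b.orthonormal.countable_index
  obtain ⟨ι, hι⟩ := exists_injective_nat w
  refine ⟨Function.extend ι b 0, fun f => ?_⟩
  rw [← hι.hasSum_iff fun n hn => by simp [Function.extend_apply' _ _ _ hn]]
  simpa [Function.comp_def, hι.extend_apply, sq, real_inner_comm f,
    real_inner_self_eq_norm_sq] using b.hasSum_inner_mul_inner f f

theorem exists_hasSum_inner_sq_sumElim_le {H ι κ : Type*} [NormedAddCommGroup H]
    [InnerProductSpace ℝ H] {e : ι → H} {g : κ → H} {w : κ → ℝ} {η : ℝ}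
    (he : ∀ f, HasSum (fun i => ⟪f, e i⟫ ^ 2) (‖f‖ ^ 2)) (hg : ∀ k, ‖g k‖ ^ 2 ≤ w k)
    (hw : HasSum w η) (f : H) :
    ∃ S, HasSum (fun x => ⟪f, Sum.elim e g x⟫ ^ 2) S ∧ ‖f‖ ^ 2 ≤ S ∧
      S ≤ (1 + η) * ‖f‖ ^ 2 := by
  have hgf : ∀ k, ⟪f, g k⟫ ^ 2 ≤ ‖f‖ ^ 2 * w k := fun k =>
    calc ⟪f, g k⟫ ^ 2 ≤ (‖f‖ * ‖g k‖) ^ 2 := by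
          simpa [sq_abs] using pow_le_pow_left₀ (abs_nonneg _) (abs_real_inner_le_norm f (g k)) 2
      _ ≤ ‖f‖ ^ 2 * w k := by rw [mul_pow]; gcongr; exact hg k
  have hsum : Summable fun k => ⟪f, g k⟫ ^ 2 :=
    (hw.mul_left _).summable.of_nonneg_of_le (fun _ => sq_nonneg _) hgf
  have hle : ∑' k, ⟪f, g k⟫ ^ 2 ≤ ‖f‖ ^ 2 * η := hasSum_le hgf hsum.hasSum (hw.mul_left _)
  refine ⟨‖f‖ ^ 2 + ∑' k, ⟪f, g k⟫ ^ 2, (he f).sum hsum.hasSum, ?_, by linarith⟩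
  linarith [hsum.hasSum.nonneg fun k => sq_nonneg ⟪f, g k⟫]

theorem exists_seq_norm_le_forall_exists_norm_sub_smul_lt {E : Type*} [NormedAddCommGroup E]
    [NormedSpace ℝ E] [TopologicalSpace.SeparableSpace E] (r : ℕ → ℝ) (hr : ∀ k, 0 < r k) :
    ∃ g : ℕ → E, (∀ k, ‖g k‖ ≤ r k) ∧
      ∀ f : E, ∀ ε > 0, ∃ (k : ℕ) (c : ℝ), ‖f - c • g k‖ < ε := by
  obtain ⟨d, hd⟩ := TopologicalSpace.exists_dense_seq E
  have hs : ∀ k, 0 < r k / (1 + ‖d k‖) := fun k => div_pos (hr k) (by positivity)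
  refine ⟨fun k => (r k / (1 + ‖d k‖)) • d k, fun k => ?_, fun f ε hε => ?_⟩
  · rw [norm_smul, Real.norm_of_nonneg (hs k).le, div_mul_eq_mul_div, div_le_iff₀ (by positivity)]
    nlinarith [hr k, norm_nonneg (d k)]
  · obtain ⟨k, hk⟩ := Metric.denseRange_iff.mp hd f ε hε
    refine ⟨k, (r k / (1 + ‖d k‖))⁻¹, ?_⟩
    rwa [smul_smul, inv_mul_cancel₀ (hs k).ne', one_smul, ← dist_eq_norm]

theorem exists_pathological_frame_one_term_general
    {H : Type*} [NormedAddCommGroup H] [InnerProductSpace ℝ H] [CompleteSpace H]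
    [TopologicalSpace.SeparableSpace H]
    (K : Set H) (C : ℝ) (hC : 1 < C) :
    ∃ (h : ℕ → H) (A B : ℝ), 0 < A ∧ 0 < B ∧ B / A < C ∧
      (∀ f : H, Summable (fun k => ⟪f, h k⟫ ^ 2) ∧
        A ^ 2 * ∑' k, ⟪f, h k⟫ ^ 2 ≤ ‖f‖ ^ 2 ∧
        ‖f‖ ^ 2 ≤ B ^ 2 * ∑' k, ⟪f, h k⟫ ^ 2) ∧
      ∀ f ∈ K, ∀ ε > 0, ∃ (i : ℕ) (c : ℝ), ‖f - c • h i‖ < ε := by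
  obtain ⟨e, he⟩ := exists_seq_hasSum_inner_sq_eq_norm_sq (H := H)
  obtain ⟨a, ha, haC⟩ := exists_between hC
  set η := a ^ 2 - 1
  have hη : 0 < η := by nlinarith
  obtain ⟨g, hg, happrox⟩ := exists_seq_norm_le_forall_exists_norm_sub_smul_lt (E := H)
    (fun k => √(η / 2 / 2 ^ k)) (fun k => by positivity)
  have hg_sq : ∀ k, ‖g k‖ ^ 2 ≤ η / 2 / 2 ^ k := fun k =>
    (Real.le_sqrt (norm_nonneg _) (by positivity)).mp (hg k)
  let σ := Equiv.natSumNatEquivNat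
  refine ⟨Sum.elim e g ∘ σ.symm, a⁻¹, 1, by positivity, one_pos,
    by simpa using haC, fun f => ?_, fun f _ ε hε => ?_⟩
  · obtain ⟨S, hS, hlo, hup⟩ :=
      exists_hasSum_inner_sq_sumElim_le he hg_sq (hasSum_geometric_two' η) f
    have hS' : HasSum (fun n => ⟪f, (Sum.elim e g ∘ σ.symm) n⟫ ^ 2) S :=
      (σ.symm.hasSum_iff (f := fun x => ⟪f, Sum.elim e g x⟫ ^ 2)).mpr hS
    rw [hS'.tsum_eq, one_pow, one_mul]
    refine ⟨hS'.summable, ?_, hlo⟩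
    calc a⁻¹ ^ 2 * S ≤ a⁻¹ ^ 2 * ((1 + η) * ‖f‖ ^ 2) := by gcongr
      _ = ‖f‖ ^ 2 := by field_simp; ring
  · obtain ⟨k, c, hk⟩ := happrox f ε hε
    exact ⟨σ (Sum.inr k), c, by simpa using hk⟩

/-- Let `H` be an infinite-dimensional separable Hilbert space and
`K ⊆ H` compact.  For every `C > 1` there is a frame `{h_i}` for `H` with frame
bounds `A, B` satisfying `B/A < C` such that every `f ∈ K` can be approximated to
arbitrary precision by a single scalar multiple of one frame element. -/
theorem exists_pathological_frame_one_term
    {H : Type*} [NormedAddCommGroup H] [InnerProductSpace ℝ H] [CompleteSpace H]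
    [TopologicalSpace.SeparableSpace H]
    (hinf : ¬ FiniteDimensional ℝ H)
    (K : Set H) (hK : IsCompact K) (C : ℝ) (hC : 1 < C) :
    ∃ (h : ℕ → H) (A B : ℝ), 0 < A ∧ 0 < B ∧ B / A < C ∧
      (∀ f : H, Summable (fun k => ⟪f, h k⟫ ^ 2) ∧
        A ^ 2 * ∑' k, ⟪f, h k⟫ ^ 2 ≤ ‖f‖ ^ 2 ∧
        ‖f‖ ^ 2 ≤ B ^ 2 * ∑' k, ⟪f, h k⟫ ^ 2) ∧
      ∀ f ∈ K, ∀ ε > 0, ∃ (i : ℕ) (c : ℝ), ‖f - c • h i‖ < ε :=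
  exists_pathological_frame_one_term_general K C hC
end

section
/- Let H be an infinite-dimensional separable Hilbert space and K ⊂ H a compact subset. Then for every C > 1 there exist constants 0 < c₁ ≤ c₂ and a frame {h_i}_{i∈ℕ} for H with frame bounds A, B satisfying B/A < C and c₁ ≤ ‖h_i‖_H ≤ c₂ for all i, such that: for every f ∈ K and every ε > 0 there exist indices i₁, i₂ ∈ ℕ and scalars c₁′, c₂′ with ‖f − c₁′·h_{i₁} − c₂′·h_{i₂}‖_H < ε (i.e., the best 2-term approximation error from the frame is 0 on K). -/
open scoped RealInnerProductSpace

/-!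
Interleave a Hilbert basis `(eₖ)` with the perturbed vectors `ε eₖ + δₖ gₖ`, where `(gₖ)` is
dense in `H` and `δₖ ‖gₖ‖ ≤ ε 2⁻ᵏ⁻¹`. The perturbed vectors add at most `3 ε² ‖f‖²` to
`∑ ⟪f, hₙ⟫²`, so the family is a frame with `B / A = √(1 + 3 ε²)`, and its norms stay in
`[ε / 2, 1]`. Yet `gₖ = δₖ⁻¹ (h₂ₖ₊₁ - ε h₂ₖ)` is a combination of two frame elements, so by
density every vector of `H` is a limit of two-term combinations.
-/

section HilbertBasis

variable {ι 𝕜 E : Type*} [RCLike 𝕜] [NormedAddCommGroup E] [InnerProductSpace 𝕜 E]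

theorem Orthonormal.countable [TopologicalSpace.SeparableSpace E] {v : ι → E}
    (hv : Orthonormal 𝕜 v) : Countable ι := by
  refine Pairwise.countable_of_isOpen_disjoint (s := fun i => Metric.ball (v i) 2⁻¹)
    (fun i j hij => Metric.ball_disjoint_ball ?_) (fun _ => Metric.isOpen_ball)
    (fun _ => Metric.nonempty_ball.2 (by norm_num))
  have hdist : ‖v i - v j‖ ^ 2 = 2 := by
    rw [@norm_sub_sq 𝕜, hv.norm_eq_one, hv.norm_eq_one, hv.inner_eq_zero hij]
    norm_num
  rw [dist_eq_norm]
  nlinarith [norm_nonneg (v i - v j)]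

theorem HilbertBasis.infinite_of_not_finiteDimensional (b : HilbertBasis ι 𝕜 E)
    (h : ¬ FiniteDimensional 𝕜 E) : Infinite ι := by
  by_contra hfin
  have : Fintype ι := @Fintype.ofFinite ι (not_infinite_iff_finite.1 hfin)
  exact h b.toOrthonormalBasis.toBasis.finiteDimensional_of_finite

theorem exists_hilbertBasis_nat [CompleteSpace E] [TopologicalSpace.SeparableSpace E]
    (h : ¬ FiniteDimensional 𝕜 E) : Nonempty (HilbertBasis ℕ 𝕜 E) := by
  obtain ⟨w, b, -⟩ := exists_hilbertBasis 𝕜 E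
  have := b.orthonormal.countable
  have := b.infinite_of_not_finiteDimensional h
  obtain ⟨_⟩ := nonempty_denumerable w
  let q : ℕ ≃ w := (Denumerable.eqv w).symm
  refine ⟨HilbertBasis.mk (b.orthonormal.comp q q.injective) ?_⟩
  rw [Set.range_comp, q.range_eq_univ, Set.image_univ, b.dense_span]

end HilbertBasis

theorem HilbertBasis.hasSum_inner_sq {ι H : Type*} [NormedAddCommGroup H] [InnerProductSpace ℝ H]
    (b : HilbertBasis ι ℝ H) (f : H) : HasSum (fun i => ⟪f, b i⟫ ^ 2) (‖f‖ ^ 2) := by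
  simpa [sq, real_inner_comm, real_inner_self_eq_norm_sq] using b.hasSum_inner_mul_inner f f

section Interleave

variable {α : Type*} (u v : ℕ → α)

def interleave (n : ℕ) : α := Sum.elim u v (Equiv.natSumNatEquivNat.symm n)

@[simp]
theorem interleave_two_mul (k : ℕ) : interleave u v (2 * k) = u k := by
  simp [interleave]

@[simp]
theorem interleave_two_mul_add_one (k : ℕ) : interleave u v (2 * k + 1) = v k := by
  simp [interleave]

theorem forall_interleave {p : α → Prop} (hu : ∀ k, p (u k)) (hv : ∀ k, p (v k)) (n : ℕ) :
    p (interleave u v n) := by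
  unfold interleave
  cases Equiv.natSumNatEquivNat.symm n <;> simp [hu, hv]

end Interleave

theorem hasSum_sq_mul_half_pow_succ (ε : ℝ) :
    HasSum (fun k : ℕ => (ε * (1 / 2) ^ (k + 1)) ^ 2) (ε ^ 2 / 3) := by
  have hterm : ∀ k : ℕ, (ε * (1 / 2) ^ (k + 1)) ^ 2 = ε ^ 2 / 4 * (1 / 4) ^ k := fun k => by
    rw [show (1 / 4 : ℝ) = (1 / 2) ^ 2 by norm_num, ← pow_mul]
    ring
  have hgeom := (hasSum_geometric_of_lt_one (r := 1 / 4) (by norm_num) (by norm_num)).mul_left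
    (ε ^ 2 / 4)
  rw [show ε ^ 2 / 4 * (1 - 1 / 4)⁻¹ = ε ^ 2 / 3 by ring] at hgeom
  simpa only [hterm] using hgeom

theorem norm_div_norm_add_one_smul_le {E : Type*} [SeminormedAddCommGroup E] [NormedSpace ℝ E]
    {r : ℝ} (hr : 0 ≤ r) (x : E) : ‖(r / (‖x‖ + 1)) • x‖ ≤ r := by
  have hx : 0 < ‖x‖ + 1 := by positivity
  rw [norm_smul, Real.norm_of_nonneg (by positivity), div_mul_eq_mul_div, div_le_iff₀ hx]
  nlinarith [norm_nonneg x]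

theorem exists_norm_sub_smul_sub_smul_lt {𝕜 E : Type*} [Semiring 𝕜] [SeminormedAddCommGroup E]
    [Module 𝕜 E] {h g : ℕ → E} (hg : DenseRange g)
    (hgh : ∀ k, ∃ (i₁ i₂ : ℕ) (a b : 𝕜), g k = a • h i₁ + b • h i₂) (f : E) {ε : ℝ}
    (hε : 0 < ε) : ∃ (i₁ i₂ : ℕ) (a b : 𝕜), ‖f - a • h i₁ - b • h i₂‖ < ε := by
  obtain ⟨k, hk⟩ := Metric.denseRange_iff.1 hg f ε hε
  obtain ⟨i₁, i₂, a, b, hgk⟩ := hgh k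
  refine ⟨i₁, i₂, a, b, ?_⟩
  rwa [sub_sub, ← hgk, ← dist_eq_norm]

section PerturbedBasis

variable {H : Type*} [NormedAddCommGroup H] [InnerProductSpace ℝ H]

theorem inner_smul_add_sq_le (f x y : H) (a : ℝ) :
    ⟪f, a • x + y⟫ ^ 2 ≤ 2 * a ^ 2 * ⟪f, x⟫ ^ 2 + 2 * ‖f‖ ^ 2 * ‖y‖ ^ 2 := by
  have hy : ⟪f, y⟫ ^ 2 ≤ ‖f‖ ^ 2 * ‖y‖ ^ 2 := by
    rw [← mul_pow, ← sq_abs]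
    exact pow_le_pow_left₀ (abs_nonneg _) (abs_real_inner_le_norm f y) 2
  rw [inner_add_right, real_inner_smul_right]
  nlinarith [sq_nonneg (a * ⟪f, x⟫ - ⟪f, y⟫)]

variable (e : HilbertBasis ℕ ℝ H) {ε : ℝ} {v : ℕ → H}

theorem exists_hasSum_inner_sq_smul_add_le (hv : ∀ k, ‖v k‖ ≤ ε * (1 / 2) ^ (k + 1)) (f : H) :
    ∃ S, HasSum (fun k => ⟪f, ε • e k + v k⟫ ^ 2) S ∧ S ≤ 3 * ε ^ 2 * ‖f‖ ^ 2 := by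
  have hmajor := ((e.hasSum_inner_sq f).mul_left (2 * ε ^ 2)).add
    ((hasSum_sq_mul_half_pow_succ ε).mul_left (2 * ‖f‖ ^ 2))
  have hle : ∀ k, ⟪f, ε • e k + v k⟫ ^ 2 ≤
      2 * ε ^ 2 * ⟪f, e k⟫ ^ 2 + 2 * ‖f‖ ^ 2 * (ε * (1 / 2) ^ (k + 1)) ^ 2 := fun k =>
    (inner_smul_add_sq_le f (e k) (v k) ε).trans <| by
      gcongr
      exact hv k
  have hsum := Summable.of_nonneg_of_le (fun _ => sq_nonneg _) hle hmajor.summable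
  refine ⟨_, hsum.hasSum, (hasSum_le hle hsum.hasSum hmajor).trans ?_⟩
  nlinarith [mul_nonneg (sq_nonneg ε) (sq_nonneg ‖f‖)]

theorem exists_hasSum_inner_sq_interleave_smul_add
    (hv : ∀ k, ‖v k‖ ≤ ε * (1 / 2) ^ (k + 1)) (f : H) :
    ∃ S, HasSum (fun n => ⟪f, interleave e (fun k => ε • e k + v k) n⟫ ^ 2) S ∧
      ‖f‖ ^ 2 ≤ S ∧ S ≤ (1 + 3 * ε ^ 2) * ‖f‖ ^ 2 := by
  obtain ⟨S, hS, hSle⟩ := exists_hasSum_inner_sq_smul_add_le e hv f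
  refine ⟨‖f‖ ^ 2 + S, HasSum.even_add_odd ?_ ?_, ?_, ?_⟩
  · simpa using e.hasSum_inner_sq f
  · simpa using hS
  · linarith [hS.nonneg fun _ => sq_nonneg _]
  · linarith

theorem norm_interleave_smul_add_mem (hv : ∀ k, ‖v k‖ ≤ ε * (1 / 2) ^ (k + 1))
    (hε : ε ≤ 1 / 2) (n : ℕ) :
    ε / 2 ≤ ‖interleave e (fun k => ε • e k + v k) n‖ ∧
      ‖interleave e (fun k => ε • e k + v k) n‖ ≤ 1 := by
  have hε₀ : 0 ≤ ε := by
    have := (norm_nonneg _).trans (hv 0)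
    norm_num at this
    linarith
  have hvk : ∀ k, ‖v k‖ ≤ ε / 2 := fun k => (hv k).trans <| by
    rw [pow_succ]
    nlinarith [pow_le_one₀ (n := k) (by norm_num : (0 : ℝ) ≤ 1 / 2) (by norm_num)]
  refine forall_interleave _ _ (p := fun x => ε / 2 ≤ ‖x‖ ∧ ‖x‖ ≤ 1) ?_ ?_ n
  · intro k
    simp only [e.orthonormal.norm_eq_one]
    constructor <;> linarith
  · intro k
    have hεe : ‖ε • e k‖ = ε := by
      rw [norm_smul, e.orthonormal.norm_eq_one, Real.norm_of_nonneg hε₀, mul_one]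
    constructor
    · linarith [norm_sub_le_norm_add (ε • e k) (v k), hvk k]
    · linarith [norm_add_le (ε • e k) (v k), hvk k]

end PerturbedBasis

theorem frame_bounds_of_hasSum_inner_sq {H : Type*} [NormedAddCommGroup H]
    [InnerProductSpace ℝ H] {h : ℕ → H} {t : ℝ} (ht : 0 < t) {f : H}
    (hf : ∃ S, HasSum (fun k => ⟪f, h k⟫ ^ 2) S ∧ ‖f‖ ^ 2 ≤ S ∧ S ≤ t * ‖f‖ ^ 2) :
    Summable (fun k => ⟪f, h k⟫ ^ 2) ∧ (√t)⁻¹ ^ 2 * ∑' k, ⟪f, h k⟫ ^ 2 ≤ ‖f‖ ^ 2 ∧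
      ‖f‖ ^ 2 ≤ 1 ^ 2 * ∑' k, ⟪f, h k⟫ ^ 2 := by
  obtain ⟨S, hS, hlow, hup⟩ := hf
  rw [hS.tsum_eq, inv_pow, Real.sq_sqrt ht.le, one_pow, one_mul, inv_mul_le_iff₀ ht]
  exact ⟨hS.summable, hup, hlow⟩
theorem exists_pathological_normed_frame_two_term_general
    {H : Type*} [NormedAddCommGroup H] [InnerProductSpace ℝ H] [CompleteSpace H]
    [TopologicalSpace.SeparableSpace H]
    (hinf : ¬ FiniteDimensional ℝ H)
    (K : Set H) (C : ℝ) (hC : 1 < C) :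
    ∃ (c₁ c₂ : ℝ) (h : ℕ → H) (A B : ℝ), 0 < c₁ ∧ c₁ ≤ c₂ ∧
      0 < A ∧ 0 < B ∧ B / A < C ∧
      (∀ i : ℕ, c₁ ≤ ‖h i‖ ∧ ‖h i‖ ≤ c₂) ∧
      (∀ f : H, Summable (fun k => ⟪f, h k⟫ ^ 2) ∧
        A ^ 2 * ∑' k, ⟪f, h k⟫ ^ 2 ≤ ‖f‖ ^ 2 ∧
        ‖f‖ ^ 2 ≤ B ^ 2 * ∑' k, ⟪f, h k⟫ ^ 2) ∧
      ∀ f ∈ K, ∀ ε > 0, ∃ (i₁ i₂ : ℕ) (a b : ℝ),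
        ‖f - a • h i₁ - b • h i₂‖ < ε := by
  obtain ⟨e⟩ := exists_hilbertBasis_nat (𝕜 := ℝ) hinf
  set ε : ℝ := min (1 / 2) ((C - 1) / 4)
  have hε : 0 < ε := lt_min (by norm_num) (by linarith)
  have hε_half : ε ≤ 1 / 2 := min_le_left _ _
  have hε_C : ε ≤ (C - 1) / 4 := min_le_right _ _
  have hratio : √(1 + 3 * ε ^ 2) < C := by
    rw [Real.sqrt_lt' (by linarith)]
    nlinarith
  set g := TopologicalSpace.denseSeq H
  set δ : ℕ → ℝ := fun k => ε * (1 / 2) ^ (k + 1) / (‖g k‖ + 1)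
  have hv : ∀ k, ‖δ k • g k‖ ≤ ε * (1 / 2) ^ (k + 1) := fun k =>
    norm_div_norm_add_one_smul_le (by positivity) (g k)
  refine ⟨ε / 2, 1, interleave e (fun k => ε • e k + δ k • g k), (√(1 + 3 * ε ^ 2))⁻¹, 1,
    by positivity, by linarith, by positivity, one_pos, by simpa using hratio,
    norm_interleave_smul_add_mem e hv hε_half,
    fun f => frame_bounds_of_hasSum_inner_sq (by positivity)
      (exists_hasSum_inner_sq_interleave_smul_add e hv f),
    fun f _ η hη => exists_norm_sub_smul_sub_smul_lt (TopologicalSpace.denseRange_denseSeq H)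
      (fun k => ⟨2 * k + 1, 2 * k, (δ k)⁻¹, -((δ k)⁻¹ * ε), ?_⟩) f hη⟩
  have hδ : δ k ≠ 0 := by positivity
  simp only [interleave_two_mul, interleave_two_mul_add_one, smul_add, smul_smul,
    inv_mul_cancel₀ hδ, one_smul, neg_smul]
  abel

/-- Let `H` be an infinite-dimensional separable Hilbert space and
`K ⊆ H` compact.  For every `C > 1` there are constants `0 < c₁ ≤ c₂` and a frame
`{h_i}` for `H` with frame bounds `A, B`, `B/A < C`, and `c₁ ≤ ‖h_i‖ ≤ c₂` for all
`i`, such that every `f ∈ K` can be approximated to arbitrary precision by a linear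
combination of two frame elements. -/
theorem exists_pathological_normed_frame_two_term
    {H : Type*} [NormedAddCommGroup H] [InnerProductSpace ℝ H] [CompleteSpace H]
    [TopologicalSpace.SeparableSpace H]
    (hinf : ¬ FiniteDimensional ℝ H)
    (K : Set H) (hK : IsCompact K) (C : ℝ) (hC : 1 < C) :
    ∃ (c₁ c₂ : ℝ) (h : ℕ → H) (A B : ℝ), 0 < c₁ ∧ c₁ ≤ c₂ ∧
      0 < A ∧ 0 < B ∧ B / A < C ∧
      (∀ i : ℕ, c₁ ≤ ‖h i‖ ∧ ‖h i‖ ≤ c₂) ∧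
      (∀ f : H, Summable (fun k => ⟪f, h k⟫ ^ 2) ∧
        A ^ 2 * ∑' k, ⟪f, h k⟫ ^ 2 ≤ ‖f‖ ^ 2 ∧
        ‖f‖ ^ 2 ≤ B ^ 2 * ∑' k, ⟪f, h k⟫ ^ 2) ∧
      ∀ f ∈ K, ∀ ε > 0, ∃ (i₁ i₂ : ℕ) (a b : ℝ),
        ‖f - a • h i₁ - b • h i₂‖ < ε :=
  exists_pathological_normed_frame_two_term_general hinf K C hC
end

section
/- Let H be a Hilbert space, (g_k)_{k=1}^N and (h_k)_{k=1}^N finite sequences in H, f ∈ H, and A > 0, and assume the stability property A²·Σ_{k∈Λ}|(f,h_k)|² ≤ ‖Σ_{k∈Λ}(f,h_k)g_k‖² for every Λ ⊆ {1,…,N}. Let β > 0, let Λ₀ ⊆ {1,…,N} with |Λ₀| ≤ n, set δ := ‖Σ_{k=1}^N (f,h_k)g_k − Σ_{k∈Λ₀}(f,h_k)g_k‖, and let m := #{k ∈ {1,…,N} : |(f,h_k)| ≥ β}. Then m ≤ n + δ²/(A²β²). -/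
open scoped RealInnerProductSpace

/-- Under the finite stability property with constant `A`, the
number `m` of coefficients `(f, h_k)` of absolute value at least `β` satisfies
`m ≤ n + δ²/(A² β²)`, where `δ` is the error of the `n`-term subsum over `Λ₀`. -/
theorem count_large_coefficients
    {H : Type*} [NormedAddCommGroup H] [InnerProductSpace ℝ H]
    {N n : ℕ} (g h : Fin N → H) (f : H) (A : ℝ) (hA : 0 < A)
    (hstab : ∀ Λ : Finset (Fin N),
      A ^ 2 * ∑ k ∈ Λ, ⟪f, h k⟫ ^ 2 ≤ ‖∑ k ∈ Λ, ⟪f, h k⟫ • g k‖ ^ 2)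
    (β : ℝ) (hβ : 0 < β)
    (Λ₀ : Finset (Fin N)) (hΛ₀ : Λ₀.card ≤ n)
    (δ : ℝ) (hδ : δ = ‖(∑ k, ⟪f, h k⟫ • g k) - ∑ k ∈ Λ₀, ⟪f, h k⟫ • g k‖)
    (m : ℕ) (hm : m = (Finset.univ.filter fun k : Fin N => β ≤ |⟪f, h k⟫|).card) :
    (m : ℝ) ≤ n + δ ^ 2 / (A ^ 2 * β ^ 2) := by
  set S : Finset (Fin N) := Finset.univ.filter fun k : Fin N => β ≤ |⟪f, h k⟫| with hS
  -- sum over complement equals the difference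
  have hsum : ∑ k ∈ Finset.univ \ Λ₀, ⟪f, h k⟫ • g k
      = (∑ k, ⟪f, h k⟫ • g k) - ∑ k ∈ Λ₀, ⟪f, h k⟫ • g k := by
    rw [Finset.sum_sdiff_eq_sub (Finset.subset_univ _)]
  have hstab' := hstab (Finset.univ \ Λ₀)
  rw [hsum, ← hδ] at hstab'
  -- each large coefficient contributes at least β²
  have hβ2 : (S \ Λ₀).card * β ^ 2 ≤ ∑ k ∈ Finset.univ \ Λ₀, ⟪f, h k⟫ ^ 2 := by
    calc ((S \ Λ₀).card : ℝ) * β ^ 2 = ∑ _k ∈ S \ Λ₀, β ^ 2 := by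
          rw [Finset.sum_const, nsmul_eq_mul]
      _ ≤ ∑ k ∈ S \ Λ₀, ⟪f, h k⟫ ^ 2 := by
          apply Finset.sum_le_sum
          intro k hk
          have hkS : k ∈ S := (Finset.mem_sdiff.mp hk).1
          have : β ≤ |⟪f, h k⟫| := (Finset.mem_filter.mp hkS).2
          calc β ^ 2 ≤ |⟪f, h k⟫| ^ 2 := pow_le_pow_left₀ hβ.le this 2
            _ = ⟪f, h k⟫ ^ 2 := sq_abs _
      _ ≤ ∑ k ∈ Finset.univ \ Λ₀, ⟪f, h k⟫ ^ 2 := by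
          apply Finset.sum_le_sum_of_subset_of_nonneg
          · exact Finset.sdiff_subset_sdiff (Finset.subset_univ _) le_rfl
          · intro k _ _; positivity
  have hkey : A ^ 2 * β ^ 2 * (S \ Λ₀).card ≤ δ ^ 2 := by
    calc A ^ 2 * β ^ 2 * (S \ Λ₀).card
        = A ^ 2 * ((S \ Λ₀).card * β ^ 2) := by ring
      _ ≤ A ^ 2 * ∑ k ∈ Finset.univ \ Λ₀, ⟪f, h k⟫ ^ 2 := by
          apply mul_le_mul_of_nonneg_left hβ2 (by positivity)
      _ ≤ δ ^ 2 := hstab'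
  have hcard : ((S \ Λ₀).card : ℝ) ≤ δ ^ 2 / (A ^ 2 * β ^ 2) := by
    rw [le_div_iff₀ (by positivity)]
    linarith [hkey]
  have hmcard : (m : ℝ) ≤ (Λ₀.card : ℝ) + ((S \ Λ₀).card : ℝ) := by
    rw [hm]
    have : S.card ≤ Λ₀.card + (S \ Λ₀).card := by
      calc S.card ≤ (Λ₀ ∪ (S \ Λ₀)).card := by
            apply Finset.card_le_card
            intro k hk
            by_cases h : k ∈ Λ₀
            · exact Finset.mem_union_left _ h
            · exact Finset.mem_union_right _ (Finset.mem_sdiff.mpr ⟨hk, h⟩)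
        _ ≤ Λ₀.card + (S \ Λ₀).card := Finset.card_union_le _ _
    exact_mod_cast this
  have : (Λ₀.card : ℝ) ≤ n := by exact_mod_cast hΛ₀
  linarith
end

section
/- Let H be a Hilbert space, (g_k)_{k=1}^N and (h_k)_{k=1}^N finite sequences in H, f ∈ H, and A > 0, and assume the stability property A²·Σ_{k∈Λ}|(f,h_k)|² ≤ ‖Σ_{k∈Λ}(f,h_k)g_k‖² for every Λ ⊆ {1,…,N}. Let β > 0, let Λ₀ ⊆ {1,…,N} with |Λ₀| ≤ n, and set δ := ‖Σ_{k=1}^N (f,h_k)g_k − Σ_{k∈Λ₀}(f,h_k)g_k‖. Then Σ_{k∈{1,…,N}, |(f,h_k)|<β} |(f,h_k)|² ≤ n·β² + δ²/A². -/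
open scoped RealInnerProductSpace

/-- Under the finite stability property with constant `A`, the sum
of the squares of the coefficients `(f, h_k)` of absolute value less than `β`
satisfies `Σ_{|(f,h_k)|<β} (f,h_k)² ≤ n β² + δ²/A²`, where `δ` is the error of the
`n`-term subsum over `Λ₀`. -/
theorem sum_sq_small_coefficients
    {H : Type*} [NormedAddCommGroup H] [InnerProductSpace ℝ H]
    {N n : ℕ} (g h : Fin N → H) (f : H) (A : ℝ) (hA : 0 < A)
    (hstab : ∀ Λ : Finset (Fin N),
      A ^ 2 * ∑ k ∈ Λ, ⟪f, h k⟫ ^ 2 ≤ ‖∑ k ∈ Λ, ⟪f, h k⟫ • g k‖ ^ 2)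
    (β : ℝ) (hβ : 0 < β)
    (Λ₀ : Finset (Fin N)) (hΛ₀ : Λ₀.card ≤ n)
    (δ : ℝ) (hδ : δ = ‖(∑ k, ⟪f, h k⟫ • g k) - ∑ k ∈ Λ₀, ⟪f, h k⟫ • g k‖) :
    ∑ k ∈ Finset.univ.filter (fun k : Fin N => |⟪f, h k⟫| < β), ⟪f, h k⟫ ^ 2
      ≤ n * β ^ 2 + δ ^ 2 / A ^ 2 := by
  set S := Finset.univ.filter (fun k : Fin N => |⟪f, h k⟫| < β) with hS
  have hsplit : ∑ k ∈ S, ⟪f, h k⟫ ^ 2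
      = ∑ k ∈ S ∩ Λ₀, ⟪f, h k⟫ ^ 2 + ∑ k ∈ S \ Λ₀, ⟪f, h k⟫ ^ 2 := by
    rw [← Finset.sum_inter_add_sum_sdiff S Λ₀]
  rw [hsplit]
  have h1 : ∑ k ∈ S ∩ Λ₀, ⟪f, h k⟫ ^ 2 ≤ n * β ^ 2 := by
    calc ∑ k ∈ S ∩ Λ₀, ⟪f, h k⟫ ^ 2 ≤ ∑ _k ∈ S ∩ Λ₀, β ^ 2 := by
          apply Finset.sum_le_sum
          intro k hk
          have hk' : |⟪f, h k⟫| < β := by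
            have := Finset.mem_inter.mp hk |>.1
            simpa [hS] using this
          calc ⟪f, h k⟫ ^ 2 = |⟪f, h k⟫| ^ 2 := (sq_abs _).symm
            _ ≤ β ^ 2 := by
              apply pow_le_pow_left₀ (abs_nonneg _) hk'.le
      _ = (S ∩ Λ₀).card * β ^ 2 := by rw [Finset.sum_const, nsmul_eq_mul]
      _ ≤ n * β ^ 2 := by
          apply mul_le_mul_of_nonneg_right _ (sq_nonneg β)
          exact_mod_cast le_trans (Finset.card_le_card Finset.inter_subset_right) hΛ₀
  have h2 : ∑ k ∈ S \ Λ₀, ⟪f, h k⟫ ^ 2 ≤ δ ^ 2 / A ^ 2 := by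
    have hsub : ∑ k ∈ S \ Λ₀, ⟪f, h k⟫ ^ 2 ≤ ∑ k ∈ Λ₀ᶜ, ⟪f, h k⟫ ^ 2 := by
      apply Finset.sum_le_sum_of_subset_of_nonneg
      · intro k hk
        simp only [Finset.mem_compl]
        exact (Finset.mem_sdiff.mp hk).2
      · intro k _ _; exact sq_nonneg _
    have hstab' := hstab Λ₀ᶜ
    have hnorm : ‖∑ k ∈ Λ₀ᶜ, ⟪f, h k⟫ • g k‖ = δ := by
      rw [hδ]
      congr 1
      rw [eq_sub_iff_add_eq, Finset.sum_compl_add_sum]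
    rw [hnorm] at hstab'
    have hA2 : (0:ℝ) < A ^ 2 := by positivity
    calc ∑ k ∈ S \ Λ₀, ⟪f, h k⟫ ^ 2 ≤ ∑ k ∈ Λ₀ᶜ, ⟪f, h k⟫ ^ 2 := hsub
      _ ≤ δ ^ 2 / A ^ 2 := by
          rw [le_div_iff₀ hA2, mul_comm]
          exact hstab'
  linarith
end
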